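/- Let w ∈ W̃_{D_m} and 0 ≤ k ≤ m. (i) w satisfies (SP1) at k if and only if w satisfies (SP1') at k. (ii) If the equivalent conditions in (i) hold, then w satisfies (SP2) at k if and only if w satisfies (SP2') at k. (iii) w satisfies (SP3) at k if and only if w satisfies (SP3') at k. -/

import Mathlib

/-!
Write `μ = μ_k^w` and `d(j) = t(j) + t(j*)`. Since `ω_{-i} = -ω_i^*` and `σ` commutes with `*`,
`μ_{-k}^w = d - μ^*`, so `ν_k^w(j) = (μ(j) + d(j) - μ(j*)) / 2` and the first halves of (SP1) and
(SP1') both say `d = 𝟐`. For `k ≤ m` the vector `ω_k + ω_k^*` takes values in `{-1, 0}`, so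
`μ_k^w - μ_{-k}^w` has entries in `{-1, 0, 1}`: hence `ν_k^w(j)` is an integer exactly when
`μ_k^w(j) = μ_{-k}^w(j)`, which gives (iii) and the bounds in (i). For (ii), under (SP1) one has
`∑ μ = ∑ t = 2m`, and a case check on the pairs `(μ(j), μ(j*))` gives
`4 c_k^w = 4 #{j : ν(j) = 2} + #{j : ν(j) ∉ ℤ}`.
-/

open Finset

namespace TypeD

abbrev VecZ (m : ℕ) := Fin (2 * m) → ℤ
abbrev VecR (m : ℕ) := Fin (2 * m) → ℝ

/-- `σ ∈ S_{2m}^∘`: even, and commuting with `j ↦ j*`. -/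
def InSO (m : ℕ) (σ : Equiv.Perm (Fin (2 * m))) : Prop :=
  Equiv.Perm.sign σ = 1 ∧ ∀ j, σ j.rev = (σ j).rev

/-- `t ∈ X_{*D_m}`. -/
def InXD (m : ℕ) (t : VecZ m) : Prop :=
  ∀ j j' : Fin (2 * m), t j + t j.rev = t j' + t j'.rev

/-- `ω_i ∈ ℤ^{2m}`: writing `i = 2m·b + c` with `0 ≤ c < 2m`, the first `c` entries
are `-b-1` and the rest are `-b`. -/
def omegaD (m : ℕ) (i : ℤ) (j : Fin (2 * m)) : ℤ :=
  if ((j : ℕ) : ℤ) < i % (2 * (m : ℤ)) then -(i / (2 * (m : ℤ))) - 1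
  else -(i / (2 * (m : ℤ)))

/-- `μ_k^w = w·ω_k − ω_k` for `w = t_t σ`. -/
def muD (m : ℕ) (t : VecZ m) (σ : Equiv.Perm (Fin (2 * m))) (k : ℤ) (j : Fin (2 * m)) : ℤ :=
  t j + omegaD m k (σ⁻¹ j) - omegaD m k j

/-- `ν_k^w = (μ_k^w + μ_{−k}^w)/2`, real-valued. -/
noncomputable def nuD (m : ℕ) (t : VecZ m) (σ : Equiv.Perm (Fin (2 * m))) (k : ℤ) (j : Fin (2 * m)) : ℝ :=
  ((muD m t σ k j + muD m t σ (-k) j : ℤ) : ℝ) / 2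

/-- `c_k^w = #{j : μ_k^w(j) = 2}`. -/
noncomputable def cD (m : ℕ) (t : VecZ m) (σ : Equiv.Perm (Fin (2 * m))) (k : ℤ) : ℕ :=
  Set.ncard {j : Fin (2 * m) | muD m t σ k j = 2}

/-- the cocharacter `μ = (2^{(q)}, 1^{(2m−2q)}, 0^{(q)})`. -/
def muQ (m q : ℕ) (j : Fin (2 * m)) : ℤ :=
  if (j : ℕ) < q then 2 else if (j : ℕ) < 2 * m - q then 1 else 0

/-- the coroot lattice `Q∨_{D_m}`. -/
def QveeD (m : ℕ) : Set (VecZ m) :=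
  {x | (∀ j, x j + x j.rev = 0) ∧
    Even (∑ j ∈ Finset.univ.filter (fun j : Fin (2 * m) => (j : ℕ) < m), x j)}

/-- `j ∈ A_a` (1-indexed `{1,…,a} ∪ {2m+1−a,…,2m}`). -/
def memA (m a : ℕ) (j : Fin (2 * m)) : Prop := (j : ℕ) < a ∨ 2 * m - a ≤ (j : ℕ)

/-- `j ∈ B_a` (1-indexed `{a+1,…,2m−a}`). -/
def memB (m a : ℕ) (j : Fin (2 * m)) : Prop := a ≤ (j : ℕ) ∧ (j : ℕ) < 2 * m - a

def IsIntVal (x : ℝ) : Prop := ∃ z : ℤ, x = (z : ℝ)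

/-- a half-integer: an element of `(1/2)ℤ ∖ ℤ`. -/
def IsHalfInt (x : ℝ) : Prop := (∃ z : ℤ, x = (z : ℝ) / 2) ∧ ¬ IsIntVal x

/-- `μ_k^w` is self-dual, i.e. `μ_k^w = μ_{−k}^w`. -/
def SelfDual (m : ℕ) (t : VecZ m) (σ : Equiv.Perm (Fin (2 * m))) (k : ℤ) : Prop :=
  ∀ j, muD m t σ k j = muD m t σ (-k) j

/-- (SP1) at `k`. -/
def SP1 (m : ℕ) (t : VecZ m) (σ : Equiv.Perm (Fin (2 * m))) (k : ℤ) : Prop :=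
  (∀ j, muD m t σ k j + muD m t σ (-k) j.rev = 2) ∧
  (∀ j, 0 ≤ muD m t σ k j ∧ muD m t σ k j ≤ 2)

/-- (SP2) at `k`. -/
def SP2 (m q : ℕ) (t : VecZ m) (σ : Equiv.Perm (Fin (2 * m))) (k : ℤ) : Prop :=
  cD m t σ k ≤ q

/-- (SP3) at `k`. -/
def SP3 (m q : ℕ) (t : VecZ m) (σ : Equiv.Perm (Fin (2 * m))) (k : ℕ) : Prop :=
  (SelfDual m t σ (k : ℤ) ∧ (fun j => muD m t σ (k : ℤ) j - muQ m q j) ∉ QveeD m) →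
    ∃ j₁ j₂ : Fin (2 * m), memA m k j₁ ∧ memB m k j₂ ∧
      muD m t σ (k : ℤ) j₁ = 1 ∧ muD m t σ (k : ℤ) j₂ = 1

/-- (SP1') at `k`. -/
def SP1' (m : ℕ) (t : VecZ m) (σ : Equiv.Perm (Fin (2 * m))) (k : ℤ) : Prop :=
  (∀ j, nuD m t σ k j + nuD m t σ k j.rev = 2) ∧
  (∀ j, 0 ≤ nuD m t σ k j ∧ nuD m t σ k j ≤ 2)

/-- (SP2') at `k`. -/
def SP2' (m q : ℕ) (t : VecZ m) (σ : Equiv.Perm (Fin (2 * m))) (k : ℤ) : Prop :=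
  (Set.ncard {j : Fin (2 * m) | nuD m t σ k j = 2} : ℝ) +
    (Set.ncard {j : Fin (2 * m) | ¬ IsIntVal (nuD m t σ k j)} : ℝ) / 4 ≤ (q : ℝ)

/-- `ν_k^w − μ ∈ Q∨_{D_m}`. -/
def NuCongQvee (m q : ℕ) (t : VecZ m) (σ : Equiv.Perm (Fin (2 * m))) (k : ℤ) : Prop :=
  ∃ y ∈ QveeD m, ∀ j, nuD m t σ k j = ((muQ m q j + y j : ℤ) : ℝ)

/-- (SP3') at `k`. -/
def SP3' (m q : ℕ) (t : VecZ m) (σ : Equiv.Perm (Fin (2 * m))) (k : ℕ) : Prop :=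
  ((∀ j, IsIntVal (nuD m t σ (k : ℤ) j)) ∧ ¬ NuCongQvee m q t σ (k : ℤ)) →
    ∃ j₁ j₂ : Fin (2 * m), memA m k j₁ ∧ memB m k j₂ ∧
      nuD m t σ (k : ℤ) j₁ = 1 ∧ nuD m t σ (k : ℤ) j₂ = 1

/-- the orbit `S_{2m}^∘ · μ` inside `ℝ^{2m}`. -/
def OrbitMu (m q : ℕ) : Set (VecR m) :=
  {x | ∃ σ : Equiv.Perm (Fin (2 * m)), InSO m σ ∧ ∀ j, x j = ((muQ m q (σ⁻¹ j) : ℤ) : ℝ)}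

/-- `Conv(S_{2m}^∘ · μ)`. -/
def ConvMu (m q : ℕ) : Set (VecR m) := convexHull ℝ (OrbitMu m q)

/-- the affine action of `w = t_t σ` on `ℝ^{2m}`. -/
noncomputable def actR (m : ℕ) (t : VecZ m) (σ : Equiv.Perm (Fin (2 * m))) (x : VecR m) (j : Fin (2 * m)) : ℝ :=
  (t j : ℝ) + x (σ⁻¹ j)

/-- the point `a_k = ((−1/2)^{(k)}, 0^{(2m−2k)}, (1/2)^{(k)})`. -/
noncomputable def aD (m k : ℕ) (j : Fin (2 * m)) : ℝ :=
  if (j : ℕ) < k then -(1 / 2) else if (j : ℕ) < 2 * m - k then 0 else 1 / 2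

/-- the point `a_{0'} = (−1, 0^{(2m−2)}, 1)`. -/
noncomputable def a0' (m : ℕ) (j : Fin (2 * m)) : ℝ :=
  if (j : ℕ) = 0 then -1 else if (j : ℕ) = 2 * m - 1 then 1 else 0

/-- the point `a_{m'} = ((−1/2)^{(m−1)}, 1/2, −1/2, (1/2)^{(m−1)})`. -/
noncomputable def am' (m : ℕ) (j : Fin (2 * m)) : ℝ :=
  if (j : ℕ) < m - 1 then -(1 / 2)
  else if (j : ℕ) = m - 1 then 1 / 2
  else if (j : ℕ) = m then -(1 / 2)
  else 1 / 2

/-- `ν_{0'}^w = w·a_{0'} − a_{0'}`. -/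
noncomputable def nu0' (m : ℕ) (t : VecZ m) (σ : Equiv.Perm (Fin (2 * m))) (j : Fin (2 * m)) : ℝ :=
  actR m t σ (a0' m) j - a0' m j

/-- `ν_{m'}^w = w·a_{m'} − a_{m'}`. -/
noncomputable def num' (m : ℕ) (t : VecZ m) (σ : Equiv.Perm (Fin (2 * m))) (j : Fin (2 * m)) : ℝ :=
  actR m t σ (am' m) j - am' m j

/-- membership in the real apartment `{x : x(1)+x(2m) = ⋯ = x(m)+x(m+1)}`. -/
def InApartR (m : ℕ) (x : VecR m) : Prop :=
  ∀ j j' : Fin (2 * m), x j + x j.rev = x j' + x j'.rev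

/-- membership in the base alcove `A_{D_m}`. -/
def InAlcove (m : ℕ) (x : VecR m) : Prop :=
  InApartR m x ∧
  (∀ j0 jt : Fin (2 * m), (j0 : ℕ) = 0 → 1 ≤ (jt : ℕ) → (jt : ℕ) ≤ m →
    x j0 < x jt ∧ x j0.rev - 1 < x jt) ∧
  (∀ j j' : Fin (2 * m), 1 ≤ (j : ℕ) → (j : ℕ) ≤ m - 2 → (j : ℕ) < (j' : ℕ) →
    (j' : ℕ) ≤ m → x j < x j')

/-- `w = t_t σ` is μ-permissible: `w ≡ t_μ mod W_{aff}` (equivalently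
`ν_0^w − μ ∈ Q∨_{D_m}`) and `w·x − x ∈ Conv(S_{2m}^∘ μ)` for all `x` in the base alcove. -/
def MuPermissible (m q : ℕ) (t : VecZ m) (σ : Equiv.Perm (Fin (2 * m))) : Prop :=
  NuCongQvee m q t σ 0 ∧
  ∀ x : VecR m, InAlcove m x → (fun j => actR m t σ x j - x j) ∈ ConvMu m q

/-- the coroot `α∨_{i,j} = e_i − e_j + e_{j*} − e_{i*}`. -/
def corootD (m : ℕ) (i j l : Fin (2 * m)) : ℤ :=
  (if l = i then 1 else 0) - (if l = j then 1 else 0) +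
    (if l = j.rev then 1 else 0) - (if l = i.rev then 1 else 0)

/-- `(t', σ')` represents `s_{α̃_{i,j;d}} · w` for `w = t_t σ`: on the apartment it
acts by `x ↦ w·x − ⟨α̃_{i,j;d}, w·x⟩ α∨_{i,j}`. -/
def IsReflOf (m : ℕ) (i j : Fin (2 * m)) (d : ℤ) (t : VecZ m) (σ : Equiv.Perm (Fin (2 * m)))
    (t' : VecZ m) (σ' : Equiv.Perm (Fin (2 * m))) : Prop :=
  ∀ x : VecR m, InApartR m x → ∀ l,
    actR m t' σ' x l =
      actR m t σ x l - (actR m t σ x i - actR m t σ x j - (d : ℝ)) * (corootD m i j l : ℝ)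

/-- Membership of `i` in `2mℤ ± I`. -/
def FaceIdxD (m : ℕ) (I : Finset ℕ) (i : ℤ) : Prop :=
  ∃ a ∈ I, ∃ b : ℤ, i = 2 * (m : ℤ) * b + (a : ℤ) ∨ i = 2 * (m : ℤ) * b - (a : ℤ)

/-- `v` is a `d`-face of type `(2m, I)`. -/
structure IsFaceD (m : ℕ) (I : Finset ℕ) (d : ℤ) (v : ℤ → VecZ m) : Prop where
  per : ∀ i, FaceIdxD m I i → ∀ j, v (i + 2 * (m : ℤ)) j = v i j - 1
  mono : ∀ i i', FaceIdxD m I i → FaceIdxD m I i' → i ≤ i' → ∀ j, v i' j ≤ v i j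
  sumEq : ∀ i i', FaceIdxD m I i → FaceIdxD m I i' → (∑ j, v i j) - (∑ j, v i' j) = i' - i
  dual : ∀ i, FaceIdxD m I i → ∀ j, v i j + v (-i) j.rev = d

/-- `μ_i^v := v_i − ω_i` for a face `v`. -/
def muFaceD (m : ℕ) (v : ℤ → VecZ m) (i : ℤ) (j : Fin (2 * m)) : ℤ := v i j - omegaD m i j

/-- `ε` of a translation vector: the sum of the first `m` entries mod 2. -/
def epsVec (m : ℕ) (x : VecZ m) : ZMod 2 :=
  ((∑ j ∈ Finset.univ.filter (fun j : Fin (2 * m) => (j : ℕ) < m), x j : ℤ) : ZMod 2)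

/-- membership of `(v, γ)` in `F_{I,D_m}`. -/
def MemFD (m : ℕ) (I : Finset ℕ) (v : ℤ → VecZ m) (γ : ZMod 2) : Prop :=
  (∃ d, IsFaceD m I d v) ∧
  (if 0 ∈ I then
    if m ∈ I then
      (fun j => muFaceD m v 0 j - muFaceD m v (m : ℤ) j) ∈ QveeD m ∧
        γ = epsVec m (fun j => muFaceD m v 0 j)
    else γ = epsVec m (fun j => muFaceD m v 0 j)
  else if m ∈ I then γ = epsVec m (fun j => muFaceD m v (m : ℤ) j)
  else True)

/-- membership of `t_tx σx` in `W_{I,D_m}` (the group conditions on `(tx, σx)` being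
assumed separately): it lies in `W_{aff,D_m}` and fixes `a_k` for all `k ∈ I`. -/
def MemWI (m : ℕ) (I : Finset ℕ) (tx : VecZ m) (σx : Equiv.Perm (Fin (2 * m))) : Prop :=
  tx ∈ QveeD m ∧ ∀ k ∈ I, ∀ j, (tx j : ℝ) + aD m k (σx⁻¹ j) = aD m k j

/-- (SP1) at `k` for a face. -/
def SP1F (m : ℕ) (v : ℤ → VecZ m) (k : ℕ) : Prop :=
  (∀ j, muFaceD m v (k : ℤ) j + muFaceD m v (-(k : ℤ)) j.rev = 2) ∧
  (∀ j, 0 ≤ muFaceD m v (k : ℤ) j ∧ muFaceD m v (k : ℤ) j ≤ 2)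

/-- (SP2) at `k` for a face. -/
def SP2F (m q : ℕ) (v : ℤ → VecZ m) (k : ℕ) : Prop :=
  Set.ncard {j : Fin (2 * m) | muFaceD m v (k : ℤ) j = 2} ≤ q

/-- (SP3) at `k` for a face. -/
def SP3F (m q : ℕ) (v : ℤ → VecZ m) (k : ℕ) : Prop :=
  ((∀ j, muFaceD m v (k : ℤ) j = muFaceD m v (-(k : ℤ)) j) ∧
      (fun j => muFaceD m v (k : ℤ) j - muQ m q j) ∉ QveeD m) →
    ∃ j₁ j₂ : Fin (2 * m), memA m k j₁ ∧ memB m k j₂ ∧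
      muFaceD m v (k : ℤ) j₁ = 1 ∧ muFaceD m v (k : ℤ) j₂ = 1

/-- `(v, γ) ∈ F_{I,D_m}` is μ-spin-permissible. -/
def SpinPermF (m q : ℕ) (I : Finset ℕ) (v : ℤ → VecZ m) (γ : ZMod 2) : Prop :=
  γ = epsVec m (fun j => muQ m q j) ∧ ∀ k ∈ I, SP1F m v k ∧ SP2F m q v k ∧ SP3F m q v k

theorem omegaD_neg (m : ℕ) (i : ℤ) (j : Fin (2 * m)) :
    omegaD m (-i) j = -omegaD m i j.rev := by
  have hj := j.isLt
  have hn : (0 : ℤ) < 2 * m := by omega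
  have hdiv := Int.emod_add_mul_ediv i (2 * m)
  have hc₀ := Int.emod_nonneg i hn.ne'
  have hc₁ := Int.emod_lt_of_pos i hn
  unfold omegaD
  rcases hc₀.eq_or_lt with hc | hc
  · obtain ⟨hq, hr⟩ := (Int.ediv_emod_unique hn).2
      (⟨by linarith, le_rfl, hn⟩ : (0 : ℤ) + 2 * m * -(i / (2 * m)) = -i ∧ _ ∧ _)
    rw [hq, hr, Fin.val_rev]
    split_ifs <;> omega
  · obtain ⟨hq, hr⟩ := (Int.ediv_emod_unique hn).2
      (⟨by linarith, by linarith, by linarith⟩ :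
        2 * m - i % (2 * m) + 2 * m * (-(i / (2 * m)) - 1) = -i ∧ _ ∧ _)
    rw [hq, hr, Fin.val_rev]
    split_ifs <;> omega

theorem omegaD_add_omegaD_rev_mem {m k : ℕ} (hk : k ≤ m) (j : Fin (2 * m)) :
    -1 ≤ omegaD m k j + omegaD m k j.rev ∧ omegaD m k j + omegaD m k j.rev ≤ 0 := by
  have hj := j.isLt
  have h₀ : (0 : ℤ) ≤ k := by omega
  have h₁ : (k : ℤ) < 2 * m := by omega
  unfold omegaD
  rw [Int.emod_eq_of_lt h₀ h₁, Int.ediv_eq_zero_of_lt h₀ h₁, Fin.val_rev]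
  split_ifs <;> omega

theorem _root_.Equiv.Perm.inv_apply_rev {n : ℕ} {σ : Equiv.Perm (Fin n)}
    (hσ : ∀ j, σ j.rev = (σ j).rev) (j : Fin n) : σ⁻¹ j.rev = (σ⁻¹ j).rev := by
  rw [Equiv.Perm.inv_eq_iff_eq, hσ, Equiv.Perm.coe_inv, Equiv.apply_symm_apply]

theorem two_mul_sum_eq_sum_add_rev {n : ℕ} (f : Fin n → ℤ) :
    2 * ∑ j, f j = ∑ j, (f j + f j.rev) := by
  rw [sum_add_distrib, ← Equiv.sum_comp Fin.revPerm f]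
  simp only [Fin.revPerm_apply]
  ring

theorem isIntVal_intCast_div_two (a : ℤ) : IsIntVal ((a : ℝ) / 2) ↔ Even a := by
  constructor
  · rintro ⟨z, hz⟩
    exact ⟨z, by exact_mod_cast (by linarith : (a : ℝ) = z + z)⟩
  · rintro ⟨z, rfl⟩
    exact ⟨z, by push_cast; ring⟩

theorem intCast_div_two_mem_Icc (a : ℤ) :
    (0 ≤ (a : ℝ) / 2 ∧ (a : ℝ) / 2 ≤ 2) ↔ 0 ≤ a ∧ a ≤ 4 := by
  constructor
  · rintro ⟨h₀, h₁⟩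
    exact ⟨by exact_mod_cast (by linarith : (0 : ℝ) ≤ a),
      by exact_mod_cast (by linarith : (a : ℝ) ≤ 4)⟩
  · rintro ⟨h₀, h₁⟩
    have h₀' : (0 : ℝ) ≤ a := by exact_mod_cast h₀
    have h₁' : (a : ℝ) ≤ 4 := by exact_mod_cast h₁
    constructor <;> linarith

theorem four_mul_card_filter_eq_two {n : ℕ} (x : Fin n → ℤ) (hx : ∀ j, 0 ≤ x j ∧ x j ≤ 2)
    (hpair : ∀ j, |x j + x j.rev - 2| ≤ 1) (hsum : ∑ j, x j = n) :
    4 * #{j | x j = 2} = 4 * #{j | x j - x j.rev = 2} + #{j | x j + x j.rev ≠ 2} := by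
  set F : Fin n → ℤ := fun j => 4 * (if x j = 2 then 1 else 0)
    - 4 * (if x j - x j.rev = 2 then 1 else 0) - (if x j + x j.rev ≠ 2 then 1 else 0)
  have hF : ∀ j, F j + F j.rev = 2 * (x j + x j.rev) - 4 := by
    intro j
    have := hx j
    have := hx j.rev
    have := abs_le.mp (hpair j)
    simp only [F, Fin.rev_rev]
    split_ifs <;> omega
  have hF₀ : ∑ j, F j = 0 := by
    have : 2 * ∑ j, F j = 2 * (2 * ∑ j, x j) - 4 * n := by
      rw [two_mul_sum_eq_sum_add_rev, two_mul_sum_eq_sum_add_rev, mul_sum]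
      simp only [hF, sum_sub_distrib, sum_const, card_univ, Fintype.card_fin]
      ring
    omega
  simp only [F, sum_sub_distrib, ← mul_sum, ← natCast_card_filter] at hF₀
  omega

section

variable {m : ℕ} {t : VecZ m} {σ : Equiv.Perm (Fin (2 * m))}

theorem sum_muD (i : ℤ) : ∑ j, muD m t σ i j = ∑ j, t j := by
  simp only [muD, sum_sub_distrib, sum_add_distrib, Equiv.sum_comp σ⁻¹ (omegaD m i)]
  ring

theorem abs_muD_sub_muD_neg_le_one {k : ℕ} (hk : k ≤ m) (j : Fin (2 * m)) :
    |muD m t σ k j - muD m t σ (-k) j| ≤ 1 := by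
  have h₁ := omegaD_add_omegaD_rev_mem hk j
  have h₂ := omegaD_add_omegaD_rev_mem hk (σ⁻¹ j)
  rw [abs_le]
  simp only [muD, omegaD_neg]
  omega

theorem isIntVal_nuD_iff {k : ℕ} (hk : k ≤ m) (j : Fin (2 * m)) :
    IsIntVal (nuD m t σ k j) ↔ muD m t σ k j = muD m t σ (-k) j := by
  have := abs_le.mp (abs_muD_sub_muD_neg_le_one (t := t) (σ := σ) hk j)
  rw [nuD, isIntVal_intCast_div_two, Int.even_iff]
  omega

theorem nuD_eq_muD_of_selfDual {i : ℤ} (h : SelfDual m t σ i) (j : Fin (2 * m)) :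
    nuD m t σ i j = muD m t σ i j := by
  rw [nuD, ← h j]
  push_cast
  ring

theorem nuCongQvee_iff {q : ℕ} {i : ℤ} {x : VecZ m} (hx : ∀ j, nuD m t σ i j = x j) :
    NuCongQvee m q t σ i ↔ (fun j => x j - muQ m q j) ∈ QveeD m := by
  simp only [NuCongQvee, hx, Int.cast_inj]
  constructor
  · rintro ⟨y, hy, hxy⟩
    convert hy using 2 with j
    rw [hxy]
    ring
  · exact fun h => ⟨_, h, fun j => by ring⟩

theorem sp3_iff_sp3' {q k : ℕ} (hk : k ≤ m) : SP3 m q t σ k ↔ SP3' m q t σ k := by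
  have hint : (∀ j, IsIntVal (nuD m t σ k j)) ↔ SelfDual m t σ k :=
    forall_congr' (isIntVal_nuD_iff hk)
  rw [SP3, SP3', hint]
  by_cases hsd : SelfDual m t σ k
  · have hν := nuD_eq_muD_of_selfDual hsd
    simp only [hsd, true_and, nuCongQvee_iff hν, hν, Int.cast_eq_one]
  · simp only [hsd, false_and, false_imp_iff]

section RevInvariant

variable (hσ : ∀ j, σ j.rev = (σ j).rev)
include hσ

theorem muD_neg (i : ℤ) (j : Fin (2 * m)) :
    muD m t σ (-i) j = t j + t j.rev - muD m t σ i j.rev := by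
  simp only [muD, omegaD_neg, Equiv.Perm.inv_apply_rev hσ]
  ring

theorem nuD_eq (i : ℤ) (j : Fin (2 * m)) :
    nuD m t σ i j = ((muD m t σ i j + (t j + t j.rev) - muD m t σ i j.rev : ℤ) : ℝ) / 2 := by
  rw [nuD, muD_neg hσ]
  congr 2
  ring

theorem muD_add_muD_neg_rev (i : ℤ) (j : Fin (2 * m)) :
    muD m t σ i j + muD m t σ (-i) j.rev = t j + t j.rev := by
  rw [muD_neg hσ, Fin.rev_rev]
  ring

theorem nuD_add_nuD_rev (i : ℤ) (j : Fin (2 * m)) :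
    nuD m t σ i j + nuD m t σ i j.rev = ((t j + t j.rev : ℤ) : ℝ) := by
  rw [nuD_eq hσ, nuD_eq hσ, Fin.rev_rev]
  push_cast
  ring

theorem sp1_iff_sp1' {k : ℕ} (hk : k ≤ m) : SP1 m t σ k ↔ SP1' m t σ k := by
  have hpair := fun j => abs_le.mp (abs_muD_sub_muD_neg_le_one (t := t) (σ := σ) hk j)
  simp only [muD_neg hσ] at hpair
  simp only [SP1, SP1', muD_add_muD_neg_rev hσ, nuD_add_nuD_rev hσ]
  norm_cast
  refine and_congr_right fun hd => ?_
  simp only [nuD_eq hσ, hd, intCast_div_two_mem_Icc]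
  constructor
  · intro h j
    have := h j
    have := h j.rev
    omega
  · intro h j
    have := h j
    have := hpair j
    have := hd j
    omega

theorem sp2_iff_sp2' {q k : ℕ} (hk : k ≤ m) (h : SP1 m t σ k) :
    SP2 m q t σ k ↔ SP2' m q t σ k := by
  obtain ⟨hd, hb⟩ := h
  simp only [muD_add_muD_neg_rev hσ] at hd
  have hpair : ∀ j, |muD m t σ k j + muD m t σ k j.rev - 2| ≤ 1 := by
    intro j
    have := abs_muD_sub_muD_neg_le_one (t := t) (σ := σ) hk j
    rwa [muD_neg hσ, hd, sub_sub_eq_add_sub] at this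
  have hsum : ∑ j, muD m t σ k j = ((2 * m : ℕ) : ℤ) := by
    have := two_mul_sum_eq_sum_add_rev t
    simp only [hd, sum_const, card_univ, Fintype.card_fin, nsmul_eq_mul] at this
    rw [sum_muD]
    push_cast at this ⊢
    linarith
  have hcount := four_mul_card_filter_eq_two _ hb hpair hsum
  have hν₂ : ∀ j, nuD m t σ k j = 2 ↔ muD m t σ k j - muD m t σ k j.rev = 2 := by
    intro j
    rw [nuD_eq hσ, hd]
    constructor
    · intro h
      have : ((muD m t σ k j + 2 - muD m t σ k j.rev : ℤ) : ℝ) = 4 := by linarith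
      norm_cast at this
      omega
    · intro h
      rw [show muD m t σ k j + 2 - muD m t σ k j.rev = 4 by omega]
      norm_num
  have hν₃ : ∀ j, ¬IsIntVal (nuD m t σ k j) ↔ muD m t σ k j + muD m t σ k j.rev ≠ 2 := by
    intro j
    rw [isIntVal_nuD_iff hk, muD_neg hσ, hd]
    omega
  simp only [SP2, SP2', cD, Set.ncard_eq_toFinset_card', Set.toFinset_ofPred, hν₂, hν₃]
  have hcount' : (#{j | muD m t σ k j - muD m t σ k j.rev = 2} : ℝ)
      + #{j | muD m t σ k j + muD m t σ k j.rev ≠ 2} / 4 = #{j | muD m t σ k j = 2} := by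
    have := congrArg (Nat.cast (R := ℝ)) hcount
    push_cast at this
    linarith
  rw [hcount', Nat.cast_le]

end RevInvariant

end

theorem statement9_general (m q : ℕ)
    (t : VecZ m) (σ : Equiv.Perm (Fin (2 * m))) (hσ : InSO m σ)
    (k : ℕ) (hk : k ≤ m) :
    (SP1 m t σ (k : ℤ) ↔ SP1' m t σ (k : ℤ)) ∧
    (SP1 m t σ (k : ℤ) → (SP2 m q t σ (k : ℤ) ↔ SP2' m q t σ (k : ℤ))) ∧
    (SP3 m q t σ k ↔ SP3' m q t σ k) :=
  ⟨sp1_iff_sp1' hσ.2 hk, sp2_iff_sp2' hσ.2 hk, sp3_iff_sp3' hk⟩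

theorem statement9 (m q : ℕ) (hm : 2 ≤ m) (hq : q ≤ m - 1)
    (t : VecZ m) (σ : Equiv.Perm (Fin (2 * m))) (ht : InXD m t) (hσ : InSO m σ)
    (k : ℕ) (hk : k ≤ m) :
    (SP1 m t σ (k : ℤ) ↔ SP1' m t σ (k : ℤ)) ∧
    (SP1 m t σ (k : ℤ) → (SP2 m q t σ (k : ℤ) ↔ SP2' m q t σ (k : ℤ))) ∧
    (SP3 m q t σ k ↔ SP3' m q t σ k) :=
  statement9_general m q t σ hσ k hk

end TypeD
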